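/- arXiv:1910.07888 — 6 statements merged into one kernel-verified Lean document; each statement's English description precedes it below -/
import Mathlib

section
/- Let x : ℝ → ℝ^N be differentiable on an interval, with distinct coordinates, satisfying x_i'(t) = Σ_{j≠i} 1/(x_i(t) − x_j(t)) for each i. Then ‖x(t)‖² = N(N−1)t + ‖x(0)‖² for all t in the interval. -/
/-!
Along the flow, `d/dt ‖x‖² = ∑ᵢ ∑_{j ≠ i} 2 xᵢ / (xᵢ - xⱼ)`. Pairing the terms `(i, j)` and
`(j, i)` gives `2 xᵢ / (xᵢ - xⱼ) + 2 xⱼ / (xⱼ - xᵢ) = 2`, so the derivative is the constant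
`N (N - 1)`, and `‖x‖²` is affine in `t` on the interval.
-/

open Finset

/-- Elementary symmetric polynomial of degree `k` in the variables `x i`, `i ∈ s`. -/
noncomputable def esymm {N : ℕ} (s : Finset (Fin N)) (k : ℕ) (x : Fin N → ℝ) : ℝ :=
  ∑ A ∈ s.powersetCard k, ∏ i ∈ A, x i

section OffDiagonalSums

variable {ι : Type*} [Fintype ι] [DecidableEq ι]

theorem sum_sum_erase_comm {M : Type*} [AddCommMonoid M] (f : ι → ι → M) :
    ∑ i, ∑ j ∈ univ.erase i, f i j = ∑ i, ∑ j ∈ univ.erase i, f j i :=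
  Finset.sum_comm' fun i j => by simp only [mem_erase, mem_univ, and_true, ne_comm, true_and]

theorem sum_sum_erase_eq_of_add_swap (f : ι → ι → ℝ) (c : ℝ)
    (hf : ∀ i j, i ≠ j → f i j + f j i = c) :
    ∑ i, ∑ j ∈ univ.erase i, f i j = Fintype.card ι * (Fintype.card ι - 1) * c / 2 := by
  have hdouble : 2 * ∑ i, ∑ j ∈ univ.erase i, f i j
      = Fintype.card ι * (Fintype.card ι - 1) * c := by
    calc 2 * ∑ i, ∑ j ∈ univ.erase i, f i j
        = ∑ i, ∑ j ∈ univ.erase i, (f i j + f j i) := by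
          rw [two_mul]
          nth_rewrite 2 [sum_sum_erase_comm]
          simp only [← sum_add_distrib]
      _ = ∑ i : ι, ∑ _j ∈ univ.erase i, c :=
          sum_congr rfl fun i _ => sum_congr rfl fun j hj => hf i j (ne_of_mem_erase hj).symm
      _ = Fintype.card ι * (Fintype.card ι - 1) * c := by
          simp only [sum_const, nsmul_eq_mul, cast_card_erase_of_mem (mem_univ _), card_univ]
          ring
  linarith

theorem sum_mul_sum_erase_inv_sub {y : ι → ℝ} (hy : Function.Injective y) :
    ∑ i, 2 * y i * ∑ j ∈ univ.erase i, 1 / (y i - y j)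
      = Fintype.card ι * (Fintype.card ι - 1) := by
  have hpair : ∀ i j, i ≠ j → 2 * y i / (y i - y j) + 2 * y j / (y j - y i) = 2 := by
    intro i j hij
    have hne : y i - y j ≠ 0 := sub_ne_zero.mpr (hy.ne hij)
    rw [← neg_sub (y i), div_neg, ← sub_eq_add_neg, ← sub_div, ← mul_sub, mul_div_assoc,
      div_self hne, mul_one]
  simp only [mul_sum, mul_one_div]
  rw [sum_sum_erase_eq_of_add_swap _ 2 hpair]
  ring

end OffDiagonalSums

theorem Convex.eq_add_mul_sub_of_hasDerivAt {f : ℝ → ℝ} {c : ℝ} {I : Set ℝ} (hI : Convex ℝ I)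
    (hf : ∀ t ∈ I, HasDerivAt f c t) {a b : ℝ} (ha : a ∈ I) (hb : b ∈ I) :
    f b = f a + c * (b - a) := by
  have hderiv : ∀ t ∈ I, HasDerivWithinAt (fun u => f u - u * c) 0 I t := fun t ht =>
    ((hf t ht).sub (hasDerivAt_mul_const c)).hasDerivWithinAt.congr_deriv (sub_self c)
  have := hI.norm_image_sub_le_of_norm_hasDerivWithin_le hderiv (fun _ _ => norm_zero.le) ha hb
  rw [zero_mul, norm_le_zero_iff, sub_eq_zero] at this
  linarith

theorem stmt5 (N : ℕ) (I : Set ℝ) (hI : Convex ℝ I) (h0 : (0 : ℝ) ∈ I)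
    (x : ℝ → Fin N → ℝ)
    (hdist : ∀ t ∈ I, ∀ i j : Fin N, i ≠ j → x t i ≠ x t j)
    (hode : ∀ t ∈ I, ∀ i : Fin N, HasDerivAt (fun s => x s i)
      (∑ j ∈ Finset.univ.erase i, 1 / (x t i - x t j)) t) :
    ∀ t ∈ I, ∑ i, (x t i) ^ 2 = (N : ℝ) * ((N : ℝ) - 1) * t + ∑ i, (x 0 i) ^ 2 := by
  have hderiv : ∀ t ∈ I, HasDerivAt (fun s => ∑ i, (x s i) ^ 2) ((N : ℝ) * ((N : ℝ) - 1)) t := by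
    intro t ht
    have hinj : Function.Injective (x t) := fun i j hij => by
      by_contra hne
      exact hdist t ht i j hne hij
    have hsq := HasDerivAt.fun_sum fun i (_ : i ∈ univ) => (hode t ht i).fun_pow 2
    refine hsq.congr_deriv ?_
    simpa using sum_mul_sum_erase_inv_sub hinj
  intro t ht
  rw [hI.eq_add_mul_sub_of_hasDerivAt hderiv h0 ht, sub_zero, add_comm]
end

section
/- Let x : I → ℝ^N solve the A_{N−1} ODE x_i' = Σ_{j≠i} 1/(x_i − x_j) with distinct coordinates. Then for each k with 2 ≤ k ≤ N, the function t ↦ e_k(x(t)) satisfies d/dt e_k(x(t)) = −(1/2)(N−k+2)(N−k+1) · e_{k-2}(x(t)), and d/dt e_1(x(t)) = 0. -/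
open Finset

/-!
Differentiating monomial by monomial, `d/dt e_k(x) = ∑ i, e_{k-1}(x without x_i) * x_i'`.
After inserting the ODE, symmetrising over ordered pairs `i ≠ l` turns this into
`½ ∑_{i ≠ l} (e_{k-1}(x without x_i) - e_{k-1}(x without x_l)) / (x_i - x_l)`, and splitting off
the remaining variable in each term shows that this quotient is `-e_{k-2}(x without x_i, x_l)`.
Finally every `(k-2)`-subset avoids exactly `(N-k+2)(N-k+1)` ordered pairs.
-/

section

variable {α β : Type*}

theorem mem_powersetCard_succ_and_mem_iff [DecidableEq α] {s A : Finset α} {i : α} {k : ℕ} :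
    A ∈ s.powersetCard (k + 1) ∧ i ∈ A ↔
      A ∈ ((s.erase i).powersetCard k).image (insert i) ∧ i ∈ s := by
  simp only [mem_powersetCard, mem_image]
  constructor
  · rintro ⟨⟨hAs, hAk⟩, hiA⟩
    refine ⟨⟨A.erase i, ⟨erase_subset_erase i hAs, by simp [card_erase_of_mem hiA, hAk]⟩,
      insert_erase hiA⟩, hAs hiA⟩
  · rintro ⟨⟨B, ⟨hBs, hBk⟩, rfl⟩, his⟩
    have hiB : i ∉ B := fun h => by simpa using hBs h
    exact ⟨⟨insert_subset his (hBs.trans (erase_subset i s)),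
      by rw [card_insert_of_notMem hiB, hBk]⟩, mem_insert_self i B⟩

theorem sum_image_insert_powersetCard [DecidableEq α] [AddCommMonoid β] {s : Finset α} {i : α}
    (hi : i ∉ s) (m : ℕ) (f : Finset α → β) :
    ∑ A ∈ (s.powersetCard m).image (insert i), f A = ∑ B ∈ s.powersetCard m, f (insert i B) :=
  sum_image fun _ hB _ hC => insert_erase_invOn.2.injOn
    (notMem_mono (mem_powersetCard.1 hB).1 hi) (notMem_mono (mem_powersetCard.1 hC).1 hi)

theorem sum_offDiag_eq_sum_sum_erase [DecidableEq α] [AddCommMonoid β] (s : Finset α)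
    (f : α → α → β) :
    ∑ p ∈ s.offDiag, f p.1 p.2 = ∑ i ∈ s, ∑ l ∈ s.erase i, f i l :=
  sum_finset_product' _ _ _ fun p => by simp [mem_offDiag, and_comm, eq_comm (a := p.1)]

theorem sum_offDiag_swap [AddCommMonoid β] (s : Finset α) (f : α → α → β) :
    ∑ p ∈ s.offDiag, f p.2 p.1 = ∑ p ∈ s.offDiag, f p.1 p.2 :=
  have swap_mem : ∀ p ∈ s.offDiag, p.swap ∈ s.offDiag := fun p hp => by
    rw [mem_offDiag] at hp ⊢
    exact ⟨hp.2.1, hp.1, hp.2.2.symm⟩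
  sum_nbij' Prod.swap Prod.swap swap_mem swap_mem (by simp) (by simp) (by simp)

/-- No injectivity of `y` is needed: `1 / (-a) = -(1 / a)` also holds at `a = 0`. -/
theorem two_mul_sum_mul_sum_inv_sub [DecidableEq α] {K : Type*} [Field K] (s : Finset α)
    (g y : α → K) :
    2 * ∑ i ∈ s, g i * ∑ l ∈ s.erase i, 1 / (y i - y l) =
      ∑ p ∈ s.offDiag, (g p.1 - g p.2) / (y p.1 - y p.2) := by
  have hS : ∑ i ∈ s, g i * ∑ l ∈ s.erase i, 1 / (y i - y l) =
      ∑ p ∈ s.offDiag, g p.1 / (y p.1 - y p.2) := by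
    simp only [sum_offDiag_eq_sum_sum_erase s (fun i l => g i / (y i - y l)), mul_sum,
      mul_one_div]
  have hswap : ∑ p ∈ s.offDiag, g p.2 / (y p.2 - y p.1) =
      ∑ p ∈ s.offDiag, g p.1 / (y p.1 - y p.2) :=
    sum_offDiag_swap s fun a b => g a / (y a - y b)
  rw [two_mul, hS]
  nth_rw 2 [← hswap]
  rw [← sum_add_distrib]
  refine sum_congr rfl fun p _ => ?_
  rw [← neg_sub (y p.1), div_neg, sub_div, ← sub_eq_add_neg]

end

section Esymm

variable {N : ℕ}

theorem esymm_zero (s : Finset (Fin N)) (y : Fin N → ℝ) : esymm s 0 y = 1 := by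
  simp [esymm]

theorem esymm_insert {s : Finset (Fin N)} {i : Fin N} (hi : i ∉ s) (m : ℕ) (y : Fin N → ℝ) :
    esymm (insert i s) (m + 1) y = esymm s (m + 1) y + y i * esymm s m y := by
  have hiB : ∀ B ∈ s.powersetCard m, i ∉ B := fun B hB h => hi (mem_powersetCard.1 hB |>.1 h)
  rw [esymm, powersetCard_succ_insert hi, sum_union, sum_image_insert_powersetCard hi, esymm,
    esymm, mul_sum]
  · exact congrArg _ (sum_congr rfl fun B hB => prod_insert (hiB B hB))
  · refine disjoint_left.2 fun A hA hA' => ?_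
    obtain ⟨B, -, rfl⟩ := mem_image.1 hA'
    exact hi (mem_powersetCard.1 hA |>.1 (mem_insert_self i B))

theorem esymm_of_mem {s : Finset (Fin N)} {i : Fin N} (hi : i ∈ s) (m : ℕ) (y : Fin N → ℝ) :
    esymm s (m + 1) y = esymm (s.erase i) (m + 1) y + y i * esymm (s.erase i) m y := by
  rw [← esymm_insert (notMem_erase i s), insert_erase hi]

theorem esymm_erase_sub_esymm_erase {s : Finset (Fin N)} {i l : Fin N} (hi : i ∈ s) (hl : l ∈ s)
    (hil : i ≠ l) (m : ℕ) (y : Fin N → ℝ) :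
    esymm (s.erase i) (m + 1) y - esymm (s.erase l) (m + 1) y =
      (y l - y i) * esymm ((s.erase i).erase l) m y := by
  rw [esymm_of_mem (mem_erase.2 ⟨hil.symm, hl⟩), esymm_of_mem (mem_erase.2 ⟨hil, hi⟩),
    erase_right_comm]
  ring

theorem sum_offDiag_esymm_erase_erase (s : Finset (Fin N)) (m : ℕ) (y : Fin N → ℝ) :
    ∑ p ∈ s.offDiag, esymm ((s.erase p.1).erase p.2) m y =
      ((#s : ℝ) - m) * ((#s : ℝ) - m - 1) * esymm s m y := by
  have hmem : ∀ (p : Fin N × Fin N) (C : Finset (Fin N)),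
      p ∈ s.offDiag ∧ C ∈ ((s.erase p.1).erase p.2).powersetCard m ↔
        p ∈ (s \ C).offDiag ∧ C ∈ s.powersetCard m := by
    simp only [mem_offDiag, mem_powersetCard, subset_erase, mem_sdiff]
    tauto
  simp only [esymm, mul_sum]
  rw [sum_comm' hmem]
  refine sum_congr rfl fun C hC => ?_
  obtain ⟨hCs, rfl⟩ := mem_powersetCard.1 hC
  rw [sum_const, offDiag_card, card_sdiff_of_subset hCs, nsmul_eq_mul,
    Nat.cast_sub (Nat.le_mul_self _), Nat.cast_mul, Nat.cast_sub (card_le_card hCs)]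
  ring

theorem hasDerivAt_esymm_succ {x : ℝ → Fin N → ℝ} {d : Fin N → ℝ} {t : ℝ} {s : Finset (Fin N)}
    (hx : ∀ i ∈ s, HasDerivAt (fun τ => x τ i) (d i) t) (k : ℕ) :
    HasDerivAt (fun τ => esymm s (k + 1) (x τ)) (∑ i ∈ s, esymm (s.erase i) k (x t) * d i) t := by
  have h := HasDerivAt.fun_sum fun A (hA : A ∈ s.powersetCard (k + 1)) =>
    HasDerivAt.fun_finsetProd fun i (hi : i ∈ A) => hx i (mem_powersetCard.1 hA |>.1 hi)
  refine h.congr_deriv ?_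
  rw [sum_comm' fun A i => mem_powersetCard_succ_and_mem_iff]
  refine sum_congr rfl fun i _ => ?_
  rw [sum_image_insert_powersetCard (notMem_erase i s), esymm, sum_mul]
  refine sum_congr rfl fun B hB => ?_
  rw [erase_insert (notMem_mono (mem_powersetCard.1 hB).1 (notMem_erase i s)), smul_eq_mul]

theorem sum_esymm_erase_mul_sum_inv_sub {s : Finset (Fin N)} {y : Fin N → ℝ} (hy : Set.InjOn y s)
    (m : ℕ) :
    ∑ i ∈ s, esymm (s.erase i) (m + 1) y * ∑ l ∈ s.erase i, 1 / (y i - y l) =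
      -(1 / 2) * ((#s : ℝ) - m) * ((#s : ℝ) - m - 1) * esymm s m y := by
  have hpair : ∀ p ∈ s.offDiag,
      (esymm (s.erase p.1) (m + 1) y - esymm (s.erase p.2) (m + 1) y) / (y p.1 - y p.2) =
        -esymm ((s.erase p.1).erase p.2) m y := fun p hp => by
    obtain ⟨h1, h2, hne⟩ := mem_offDiag.1 hp
    have hy12 : y p.1 - y p.2 ≠ 0 := sub_ne_zero.2 fun h => hne (hy h1 h2 h)
    rw [esymm_erase_sub_esymm_erase h1 h2 hne, ← neg_sub (y p.1), neg_mul, neg_div,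
      mul_div_cancel_left₀ _ hy12]
  have h2 := two_mul_sum_mul_sum_inv_sub s (fun i => esymm (s.erase i) (m + 1) y) y
  rw [sum_congr rfl hpair, sum_neg_distrib, sum_offDiag_esymm_erase_erase] at h2
  linarith

end Esymm

theorem stmt8 (N : ℕ) (I : Set ℝ) (x : ℝ → Fin N → ℝ)
    (hcham : ∀ t ∈ I, ∀ i j : Fin N, i < j → x t j < x t i)
    (hode : ∀ t ∈ I, ∀ i : Fin N, HasDerivAt (fun s => x s i)
      (∑ j ∈ Finset.univ.erase i, 1 / (x t i - x t j)) t) :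
    ∀ t ∈ I,
      (∀ k : ℕ, 2 ≤ k → k ≤ N →
        HasDerivAt (fun s => esymm Finset.univ k (x s))
          (-(1 / 2) * ((N : ℝ) - k + 2) * ((N : ℝ) - k + 1)
            * esymm Finset.univ (k - 2) (x t)) t) ∧
      HasDerivAt (fun s => esymm Finset.univ 1 (x s)) 0 t := by
  intro t ht
  have hderiv := hasDerivAt_esymm_succ (s := univ) fun i _ => hode t ht i
  refine ⟨fun k hk _ => ?_, ?_⟩
  · obtain ⟨m, rfl⟩ : ∃ m, k = m + 2 := ⟨k - 2, by omega⟩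
    have hinj : Function.Injective (x t) := StrictAnti.injective fun i j => hcham t ht i j
    convert hderiv (m + 1) using 1
    rw [sum_esymm_erase_mul_sum_inv_sub hinj.injOn, card_univ, Fintype.card_fin,
      Nat.add_sub_cancel]
    push_cast
    ring
  · convert hderiv 0 using 1
    have h2 := two_mul_sum_mul_sum_inv_sub univ (fun _ => (1 : ℝ)) (x t)
    simp only [sub_self, zero_div, sum_const_zero, one_mul] at h2
    simp only [esymm_zero, one_mul]
    linarith
end

section
/- Let z = (z_1,...,z_N) be the vector of ordered zeros of the N-th Hermite polynomial H_N (orthogonal w.r.t. e^{−x²}). Then for every c > 0, the function x(t) := √(2t + c²) · z solves the A_{N−1} ODE x_i'(t) = Σ_{j≠i} 1/(x_i(t) − x_j(t)) with x(0) = c·z. -/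
/-!
Put `y = √2 z`. The `y i` are `N` distinct zeros of the monic probabilists' Hermite polynomial
`He_N` of degree `N`, so `He_N = q := ∏ j, (X - y j)`. For such a product,
`q''(y i) = 2 q'(y i) ∑_{j ≠ i} 1 / (y i - y j)` with `q'(y i) ≠ 0`, while the Hermite equation
`He_N'' = X He_N' - N He_N` gives `He_N''(y i) = y i He_N'(y i)`. Hence
`∑_{j ≠ i} 1 / (y i - y j) = y i / 2`, i.e. `∑_{j ≠ i} 1 / (z i - z j) = z i`. The right-hand
side of the ODE is homogeneous of degree `-1`, so `a(t) z` is a solution as soon as `a a' = 1`,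
which `a(t) = √(2t + c²)` satisfies.
-/

open Finset

open Polynomial Lagrange

namespace Polynomial

theorem derivative_hermite_succ (n : ℕ) :
    derivative (hermite (n + 1)) = (n + 1 : ℤ[X]) * hermite n := by
  induction n with
  | zero => simp
  | succ n ih =>
    rw [hermite_succ (n + 1), derivative_sub, derivative_mul, derivative_X, one_mul, ih,
      derivative_mul, hermite_succ n]
    simp only [derivative_add, derivative_natCast, derivative_one, add_zero, zero_mul, zero_add]
    push_cast
    ring

theorem derivative_derivative_hermite (n : ℕ) :
    derivative (derivative (hermite n)) =
      X * derivative (hermite n) - (n : ℤ[X]) * hermite n := by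
  cases n with
  | zero => simp
  | succ n =>
    rw [derivative_hermite_succ, derivative_mul, hermite_succ n]
    simp only [derivative_add, derivative_natCast, derivative_one, add_zero, zero_mul, zero_add]
    push_cast
    ring

end Polynomial

namespace Lagrange

variable {F : Type*} [Field F] {ι : Type*} {s : Finset ι} {v : ι → F}

theorem eq_nodal_of_monic {p : F[X]} (hp : p.Monic) (hdeg : p.natDegree = #s)
    (hvs : Set.InjOn v s) (hroot : ∀ i ∈ s, p.eval (v i) = 0) : p = nodal s v := by
  refine eq_of_degree_le_of_eval_index_eq s hvs ?_ ?_ ?_ ?_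
  · rw [degree_eq_natDegree hp.ne_zero, hdeg]
  · rw [degree_eq_natDegree hp.ne_zero, hdeg, degree_nodal]
  · rw [hp.leadingCoeff, nodal_monic.leadingCoeff]
  · intro i hi
    rw [hroot i hi, eval_nodal_at_node hi]

theorem eval_derivative_derivative_nodal_at_node [DecidableEq ι] (hvs : Set.InjOn v s) {i : ι}
    (hi : i ∈ s) :
    eval (v i) (derivative (derivative (nodal s v)))
      = 2 * eval (v i) (derivative (nodal s v)) * ∑ j ∈ s.erase i, (v i - v j)⁻¹ := by
  have hne : ∀ j ∈ s.erase i, v i - v j ≠ 0 := fun j hj =>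
    sub_ne_zero_of_ne fun h => (mem_erase.mp hj).1 (hvs (mem_erase.mp hj).2 hi h.symm)
  have hsecond : eval (v i) (derivative (derivative (nodal s v)))
      = 2 * eval (v i) (derivative (nodal (s.erase i) v)) := by
    rw [nodal_eq_mul_nodal_erase hi]
    simp only [derivative_mul, derivative_sub, derivative_X, derivative_C, sub_zero, one_mul,
      zero_mul, derivative_add, eval_add, eval_mul, eval_sub, eval_X, eval_C, sub_self]
    ring
  rw [hsecond, eval_nodal_derivative_eval_node_eq hi, derivative_nodal, eval_finsetSum, mul_assoc]
  congr 1
  rw [mul_sum]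
  refine Finset.sum_congr rfl fun j hj => ?_
  rw [eval_nodal, eval_nodal, ← mul_prod_erase (s.erase i) (fun k => v i - v k) hj,
    mul_comm (v i - v j), mul_assoc, mul_inv_cancel₀ (hne j hj), mul_one]

end Lagrange

theorem sum_inv_sub_eq_half_of_aeval_hermite_eq_zero {F : Type*} [Field F] [NeZero (2 : F)]
    {ι : Type*} [Fintype ι] [DecidableEq ι] {v : ι → F} (hv : Function.Injective v)
    (hroot : ∀ i, aeval (v i) (hermite (Fintype.card ι)) = 0) (i : ι) :
    ∑ j ∈ univ.erase i, (v i - v j)⁻¹ = v i / 2 := by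
  set P : F[X] := (hermite (Fintype.card ι)).map (algebraMap ℤ F)
  have hPeval : ∀ j, P.eval (v j) = 0 := fun j => by rw [eval_map_algebraMap, hroot j]
  have hP : P = nodal univ v :=
    eq_nodal_of_monic ((hermite_monic _).map _)
      (by rw [(hermite_monic _).natDegree_map, natDegree_hermite, card_univ]) hv.injOn
      fun j _ => hPeval j
  have hode : eval (v i) (derivative (derivative P)) = v i * eval (v i) (derivative P) := by
    have := congrArg (fun p => eval (v i) (p.map (algebraMap ℤ F)))
      (derivative_derivative_hermite (Fintype.card ι))
    simp only [Polynomial.map_sub, Polynomial.map_mul, map_X, Polynomial.map_natCast,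
      ← derivative_map, eval_sub, eval_mul, eval_X, eval_natCast] at this
    rwa [hPeval i, mul_zero, sub_zero] at this
  have hderiv_ne : eval (v i) (derivative P) ≠ 0 := by
    rw [hP, eval_nodal_derivative_eval_node_eq (mem_univ i), eval_nodal, prod_ne_zero_iff]
    exact fun j hj => sub_ne_zero_of_ne fun h => (mem_erase.mp hj).1 (hv h).symm
  rw [hP, eval_derivative_derivative_nodal_at_node hv.injOn (mem_univ i), ← hP] at hode
  rw [eq_div_iff two_ne_zero]
  exact mul_right_cancel₀ hderiv_ne (by linear_combination hode)

theorem sum_inv_mul_sub_mul {F : Type*} [Field F] {ι : Type*} (s : Finset ι) (a : F)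
    (x : ι → F) (i : ι) :
    ∑ j ∈ s, (a * x i - a * x j)⁻¹ = a⁻¹ * ∑ j ∈ s, (x i - x j)⁻¹ := by
  simp only [← mul_sub, mul_inv, mul_sum]

theorem sum_inv_sub_eq_of_aeval_hermite_eq_zero {N : ℕ} {z : Fin N → ℝ}
    (hz : Function.Injective z) (hroot : ∀ i, aeval (√2 * z i) (hermite N) = (0 : ℝ))
    (i : Fin N) :
    ∑ j ∈ univ.erase i, (z i - z j)⁻¹ = z i := by
  have h2 : (√2 : ℝ) ≠ 0 := by positivity
  have hroots := sum_inv_sub_eq_half_of_aeval_hermite_eq_zero (v := fun j => √2 * z j)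
    ((mul_right_injective₀ h2).comp hz) (by simpa using hroot) i
  rw [sum_inv_mul_sub_mul, inv_mul_eq_iff_eq_mul₀ h2] at hroots
  rw [hroots, ← mul_div_assoc, ← mul_assoc, Real.mul_self_sqrt zero_le_two]
  ring

theorem hasDerivAt_sqrt_mul_of_sum_inv_sub_eq {ι : Type*} [Fintype ι] [DecidableEq ι]
    {z : ι → ℝ} (hz : ∀ i, ∑ j ∈ univ.erase i, (z i - z j)⁻¹ = z i) {c t : ℝ}
    (ht : 0 < 2 * t + c ^ 2) (i : ι) :
    HasDerivAt (fun s => √(2 * s + c ^ 2) * z i)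
      (∑ j ∈ univ.erase i, (√(2 * t + c ^ 2) * z i - √(2 * t + c ^ 2) * z j)⁻¹) t := by
  have hlin : HasDerivAt (fun s : ℝ => 2 * s + c ^ 2) 2 t := by
    simpa using ((hasDerivAt_id t).const_mul 2).add_const (c ^ 2)
  refine (((Real.hasDerivAt_sqrt ht.ne').comp t hlin).mul_const (z i)).congr_deriv ?_
  rw [sum_inv_mul_sub_mul, hz]
  field_simp

/-- The physicists' Hermite polynomial `H_N`, expressed via the probabilists' Hermite
polynomial from Mathlib: `H_N (y) = 2^(N/2) * He_N (√2 * y)`, so the zeros of `H_N` are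
exactly the points `y` with `He_N (√2 * y) = 0`. -/
theorem stmt14 (N : ℕ) (z : Fin N → ℝ) (hz : StrictAnti z)
    (hroot : ∀ i : Fin N,
      Polynomial.aeval (Real.sqrt 2 * z i) (Polynomial.hermite N) = (0 : ℝ))
    (c : ℝ) (hc : 0 < c) :
    (∀ i : Fin N, Real.sqrt (2 * 0 + c ^ 2) * z i = c * z i) ∧
    (∀ t ∈ Set.Ici (0 : ℝ), ∀ i : Fin N,
      HasDerivAt (fun s => Real.sqrt (2 * s + c ^ 2) * z i)
        (∑ j ∈ Finset.univ.erase i,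
          1 / (Real.sqrt (2 * t + c ^ 2) * z i - Real.sqrt (2 * t + c ^ 2) * z j)) t) := by
  refine ⟨fun i => by rw [mul_zero, zero_add, Real.sqrt_sq hc.le], fun t ht i => ?_⟩
  have hpos : 0 < 2 * t + c ^ 2 := by have : (0 : ℝ) ≤ t := ht; positivity
  simpa only [one_div] using hasDerivAt_sqrt_mul_of_sum_inv_sub_eq
    (sum_inv_sub_eq_of_aeval_hermite_eq_zero hz.injective hroot) hpos i
end

section
/- Let N = 3 and x_0 ∈ ℝ³ with x_{0,1} > x_{0,2} > x_{0,3} and x_{0,1}+x_{0,2}+x_{0,3} = 0. If x solves the A₂ ODE x_i' = Σ_{j≠i} 1/(x_i−x_j) with x(0) = x_0, then for all t ≥ 0 the coordinates x_1(t), x_2(t), x_3(t) are exactly the three roots of the cubic z³ + (e_2(x_0) − 3t)z − e_3(x_0), i.e. ∏_{k=1}^3 (z − x_k(t)) = z³ + (e_2(x_0) − 3t)z − e_3(x_0). -/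
/-!
Along the Calogero–Moser flow the monic polynomial `p_t(z) = ∏ (z - x_i(t))` solves the backward
heat equation `∂_t p = -½ ∂_z² p`. For three roots summing to zero (the sum of the velocities
vanishes, so this persists) `∂_z² p = 6z`, hence `p_t(z) = p_0(z) - 3tz`, and `p_0` is read off
by Vieta.
-/

open Finset

/-- The velocity field of the type-A Calogero–Moser gradient flow. -/
noncomputable def cmVelocity {ι : Type*} [Fintype ι] [DecidableEq ι] (y : ι → ℝ) (i : ι) : ℝ :=
  ∑ j ∈ univ.erase i, 1 / (y i - y j)

theorem sum_cmVelocity {ι : Type*} [Fintype ι] [DecidableEq ι] (y : ι → ℝ) :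
    ∑ i, cmVelocity y i = 0 := by
  -- The diagonal term `1 / (y i - y i)` is `0`, so the sum is an antisymmetric double sum.
  have hfull : ∑ i, cmVelocity y i = ∑ i, ∑ j, 1 / (y i - y j) := by
    refine sum_congr rfl fun i _ => ?_
    rw [cmVelocity, ← sum_erase_add _ _ (mem_univ i), sub_self, div_zero, add_zero]
  have hanti : ∑ i, ∑ j, 1 / (y i - y j) = -∑ i, ∑ j, 1 / (y i - y j) := by
    conv_lhs => rw [sum_comm]
    simp only [← sum_neg_distrib]
    refine sum_congr rfl fun _ _ => sum_congr rfl fun _ _ => ?_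
    rw [← neg_sub, div_neg]
  linarith

theorem cmVelocity_mul_prod_fin_three {y : Fin 3 → ℝ} (hy : Function.Injective y) (z : ℝ) :
    cmVelocity y 0 * ((z - y 1) * (z - y 2)) + cmVelocity y 1 * ((z - y 0) * (z - y 2))
      + cmVelocity y 2 * ((z - y 0) * (z - y 1)) = 3 * z - (y 0 + y 1 + y 2) := by
  -- The right-hand side is `½ p''(z)` for `p(z) = ∏ i, (z - y i)`.
  have h01 : y 0 - y 1 ≠ 0 := sub_ne_zero.2 (hy.ne (by decide))
  have h02 : y 0 - y 2 ≠ 0 := sub_ne_zero.2 (hy.ne (by decide))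
  have h12 : y 1 - y 2 ≠ 0 := sub_ne_zero.2 (hy.ne (by decide))
  have h10 : y 1 - y 0 ≠ 0 := sub_ne_zero.2 (hy.ne (by decide))
  have h20 : y 2 - y 0 ≠ 0 := sub_ne_zero.2 (hy.ne (by decide))
  have h21 : y 2 - y 1 ≠ 0 := sub_ne_zero.2 (hy.ne (by decide))
  simp only [cmVelocity, show univ.erase (0 : Fin 3) = {1, 2} by decide,
    show univ.erase (1 : Fin 3) = {0, 2} by decide, show univ.erase (2 : Fin 3) = {0, 1} by decide,
    sum_pair (show (1 : Fin 3) ≠ 2 by decide), sum_pair (show (0 : Fin 3) ≠ 2 by decide),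
    sum_pair (show (0 : Fin 3) ≠ 1 by decide)]
  field_simp
  ring

theorem eq_add_mul_sub_of_hasDerivWithinAt_Ici {f : ℝ → ℝ} {c a : ℝ}
    (hf : ∀ t ∈ Set.Ici a, HasDerivWithinAt f c (Set.Ici a) t) :
    ∀ t ∈ Set.Ici a, f t = f a + c * (t - a) := by
  intro t ht
  have hg : ∀ s, HasDerivWithinAt (fun s => f a + c * (s - a)) c (Set.Ici s) s := fun s => by
    simpa using (((hasDerivAt_id s).sub_const a).const_mul c).const_add (f a) |>.hasDerivWithinAt
  refine eq_of_has_deriv_right_eq (fun s hs => (hf s hs.1).mono (Set.Ici_subset_Ici.2 hs.1))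
    (fun s _ => hg s) (fun s hs => (hf s hs.1).continuousWithinAt.mono fun u hu => hu.1)
    (by fun_prop) (by ring) t ⟨ht, le_rfl⟩

theorem esymm_univ_two_fin_three (y : Fin 3 → ℝ) :
    esymm univ 2 y = y 0 * y 1 + y 0 * y 2 + y 1 * y 2 := by
  rw [esymm, show (univ : Finset (Fin 3)).powersetCard 2 = {{0, 1}, {0, 2}, {1, 2}} by decide,
    sum_insert (by decide), sum_insert (by decide), sum_singleton,
    prod_pair (by decide), prod_pair (by decide), prod_pair (by decide), add_assoc]

theorem esymm_univ_three_fin_three (y : Fin 3 → ℝ) : esymm univ 3 y = y 0 * y 1 * y 2 := by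
  rw [esymm, show (univ : Finset (Fin 3)).powersetCard 3 = {univ} by decide, sum_singleton,
    Fin.prod_univ_three]

theorem stmt16_general (x : ℝ → Fin 3 → ℝ) (x0 : Fin 3 → ℝ)
    (hsum : x0 0 + x0 1 + x0 2 = 0)
    (hstart : x 0 = x0)
    (hcham : ∀ t ∈ Set.Ici (0 : ℝ), ∀ i j : Fin 3, i < j → x t j < x t i)
    (hode : ∀ t ∈ Set.Ici (0 : ℝ), ∀ i : Fin 3, HasDerivWithinAt (fun s => x s i)
      (∑ j ∈ Finset.univ.erase i, 1 / (x t i - x t j)) (Set.Ici 0) t) :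
    ∀ t ∈ Set.Ici (0 : ℝ), ∀ z : ℝ,
      (z - x t 0) * (z - x t 1) * (z - x t 2)
        = z ^ 3 + (esymm Finset.univ 2 x0 - 3 * t) * z - esymm Finset.univ 3 x0 := by
  have hvel : ∀ s ∈ Set.Ici (0 : ℝ), ∀ i, HasDerivWithinAt (fun s => x s i)
      (cmVelocity (x s) i) (Set.Ici 0) s := hode
  have hsum_flow : ∀ s ∈ Set.Ici (0 : ℝ), x s 0 + x s 1 + x s 2 = 0 := by
    have hderiv : ∀ s ∈ Set.Ici (0 : ℝ), HasDerivWithinAt (fun s => x s 0 + x s 1 + x s 2) 0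
        (Set.Ici 0) s := fun s hs => by
      refine (((hvel s hs 0).add (hvel s hs 1)).add (hvel s hs 2)).congr_deriv ?_
      rw [← Fin.sum_univ_three, sum_cmVelocity]
    intro s hs
    simpa [hstart, hsum] using eq_add_mul_sub_of_hasDerivWithinAt_Ici hderiv s hs
  intro t ht z
  have hderiv : ∀ s ∈ Set.Ici (0 : ℝ), HasDerivWithinAt
      (fun s => (z - x s 0) * (z - x s 1) * (z - x s 2)) (-3 * z) (Set.Ici 0) s := fun s hs => by
    have hinj : Function.Injective (x s) := StrictAnti.injective (f := x s) (hcham s hs)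
    refine ((((hvel s hs 0).const_sub z).mul ((hvel s hs 1).const_sub z)).mul
      ((hvel s hs 2).const_sub z)).congr_deriv ?_
    simp only [Pi.mul_apply]
    linear_combination -(cmVelocity_mul_prod_fin_three hinj z) + hsum_flow s hs
  have hlin := eq_add_mul_sub_of_hasDerivWithinAt_Ici hderiv t ht
  simp only [hstart] at hlin
  rw [hlin, esymm_univ_two_fin_three, esymm_univ_three_fin_three]
  linear_combination (-z ^ 2) * hsum

theorem stmt16 (x : ℝ → Fin 3 → ℝ) (x0 : Fin 3 → ℝ)
    (hord : x0 1 < x0 0 ∧ x0 2 < x0 1) (hsum : x0 0 + x0 1 + x0 2 = 0)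
    (hstart : x 0 = x0)
    (hcham : ∀ t ∈ Set.Ici (0 : ℝ), ∀ i j : Fin 3, i < j → x t j < x t i)
    (hode : ∀ t ∈ Set.Ici (0 : ℝ), ∀ i : Fin 3, HasDerivWithinAt (fun s => x s i)
      (∑ j ∈ Finset.univ.erase i, 1 / (x t i - x t j)) (Set.Ici 0) t) :
    ∀ t ∈ Set.Ici (0 : ℝ), ∀ z : ℝ,
      (z - x t 0) * (z - x t 1) * (z - x t 2)
        = z ^ 3 + (esymm Finset.univ 2 x0 - 3 * t) * z - esymm Finset.univ 3 x0 :=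
  stmt16_general x x0 hsum hstart hcham hode
end

section
/- Let ν > 0, N = 2, and x solve the B₂ ODE x_i' = Σ_{j≠i}(1/(x_i−x_j)+1/(x_i+x_j)) + ν/x_i with x(0) = x_0 in the open chamber {x_1 > x_2 > 0}. Then for all t ≥ 0, x_1(t)² + x_2(t)² = 4(1+ν)t + ‖x_0‖² and x_1(t)²·x_2(t)² = 4ν(1+ν)t² + 2ν‖x_0‖²t + x_{0,1}²x_{0,2}². -/
open Finset

/-!
Along the flow, `p = x₀² + x₁²` and `q = x₀² x₁²` satisfy `p' = 4(1 + ν)` and `q' = 2νp`: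
the singular terms of the B₂ velocity cancel in both derivatives. Hence `p` is affine and
`q` quadratic in `t`, and both are pinned down by their values at `t = 0`.
-/

open Set

/-- Velocity of the particle at `a` in the two-particle B₂ Calogero–Moser flow, its partner
being at `b`. -/
noncomputable def b2Velocity (ν a b : ℝ) : ℝ :=
  1 / (a - b) + 1 / (a + b) + ν / a

section B2Identities

variable (ν : ℝ) {a b : ℝ}

theorem mul_b2Velocity_add_mul_b2Velocity (hb : 0 < b) (hba : b < a) :
    a * b2Velocity ν a b + b * b2Velocity ν b a = 2 * (1 + ν) := by
  have hab : a - b ≠ 0 := sub_ne_zero.mpr hba.ne'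
  have hba' : b - a ≠ 0 := sub_ne_zero.mpr hba.ne
  have ha : 0 < a := hb.trans hba
  have hsum : a + b ≠ 0 := (add_pos ha hb).ne'
  have hsum' : b + a ≠ 0 := (add_pos hb ha).ne'
  unfold b2Velocity
  field_simp
  ring

theorem b2Velocity_cross_identity (hb : 0 < b) (hba : b < a) :
    a * b * (b * b2Velocity ν a b + a * b2Velocity ν b a) = ν * (a ^ 2 + b ^ 2) := by
  have hab : a - b ≠ 0 := sub_ne_zero.mpr hba.ne'
  have hba' : b - a ≠ 0 := sub_ne_zero.mpr hba.ne
  have ha : 0 < a := hb.trans hba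
  have hsum : a + b ≠ 0 := (add_pos ha hb).ne'
  have hsum' : b + a ≠ 0 := (add_pos hb ha).ne'
  unfold b2Velocity
  field_simp
  ring

end B2Identities

section Derivatives

variable {f g : ℝ → ℝ} {f' g' s : ℝ} {S : Set ℝ}

theorem HasDerivWithinAt.sq_add_sq (hf : HasDerivWithinAt f f' S s)
    (hg : HasDerivWithinAt g g' S s) :
    HasDerivWithinAt (fun u => f u ^ 2 + g u ^ 2) (2 * (f s * f' + g s * g')) S s :=
  ((hf.fun_pow 2).fun_add (hg.fun_pow 2)).congr_deriv (by push_cast; ring)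

theorem HasDerivWithinAt.sq_mul_sq (hf : HasDerivWithinAt f f' S s)
    (hg : HasDerivWithinAt g g' S s) :
    HasDerivWithinAt (fun u => f u ^ 2 * g u ^ 2)
      (2 * (f s * g s * (g s * f' + f s * g'))) S s :=
  ((hf.fun_pow 2).fun_mul (hg.fun_pow 2)).congr_deriv (by push_cast; ring)

theorem hasDerivAt_quadratic (α β γ s : ℝ) :
    HasDerivAt (fun u => α * u ^ 2 + β * u + γ) (2 * α * s + β) s := by
  have h := (((hasDerivAt_pow 2 s).const_mul α).add ((hasDerivAt_id s).const_mul β)).add_const γ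
  exact h.congr_deriv (by simp; ring)

theorem eqOn_Ici_of_hasDerivWithinAt {a : ℝ} {d : ℝ → ℝ}
    (hf : ∀ s ∈ Ici a, HasDerivWithinAt f (d s) (Ici a) s)
    (hg : ∀ s, HasDerivAt g (d s) s) (ha : f a = g a) :
    ∀ t ∈ Ici a, f t = g t := by
  intro t ht
  have hfc : ContinuousOn f (Icc a t) := fun s hs =>
    (hf s hs.1).continuousWithinAt.mono Icc_subset_Ici_self
  have hgc : ContinuousOn g (Icc a t) := fun s _ => (hg s).continuousAt.continuousWithinAt
  exact eq_of_has_deriv_right_eq (fun s hs => (hf s hs.1).mono (Ici_subset_Ici.mpr hs.1))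
    (fun s _ => (hg s).hasDerivWithinAt) hfc hgc ha t (right_mem_Icc.mpr ht)

end Derivatives

theorem stmt17_general (ν : ℝ) (x : ℝ → Fin 2 → ℝ) (x0 : Fin 2 → ℝ)
    (hstart : x 0 = x0)
    (hcham : ∀ t ∈ Set.Ici (0 : ℝ), 0 < x t 1 ∧ x t 1 < x t 0)
    (hode : ∀ t ∈ Set.Ici (0 : ℝ), ∀ i : Fin 2, HasDerivWithinAt (fun s => x s i)
      (∑ j ∈ Finset.univ.erase i,
          (1 / (x t i - x t j) + 1 / (x t i + x t j)) + ν / x t i)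
      (Set.Ici 0) t) :
    ∀ t ∈ Set.Ici (0 : ℝ),
      (x t 0) ^ 2 + (x t 1) ^ 2 = 4 * (1 + ν) * t + ((x0 0) ^ 2 + (x0 1) ^ 2) ∧
      (x t 0) ^ 2 * (x t 1) ^ 2
        = 4 * ν * (1 + ν) * t ^ 2 + 2 * ν * ((x0 0) ^ 2 + (x0 1) ^ 2) * t
          + (x0 0) ^ 2 * (x0 1) ^ 2 := by
  have hv0 : ∀ s ∈ Ici (0 : ℝ), HasDerivWithinAt (fun u => x u 0)
      (b2Velocity ν (x s 0) (x s 1)) (Ici 0) s := fun s hs => by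
    simpa [b2Velocity, show univ.erase (0 : Fin 2) = {1} by decide] using hode s hs 0
  have hv1 : ∀ s ∈ Ici (0 : ℝ), HasDerivWithinAt (fun u => x u 1)
      (b2Velocity ν (x s 1) (x s 0)) (Ici 0) s := fun s hs => by
    simpa [b2Velocity, show univ.erase (1 : Fin 2) = {0} by decide] using hode s hs 1
  have hsum : ∀ t ∈ Ici (0 : ℝ),
      x t 0 ^ 2 + x t 1 ^ 2 = 0 * t ^ 2 + 4 * (1 + ν) * t + (x0 0 ^ 2 + x0 1 ^ 2) := by
    refine eqOn_Ici_of_hasDerivWithinAt (fun s hs => ?_) (hasDerivAt_quadratic _ _ _)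
      (by simp [hstart])
    obtain ⟨hpos, hlt⟩ := hcham s hs
    refine ((hv0 s hs).sq_add_sq (hv1 s hs)).congr_deriv ?_
    rw [mul_b2Velocity_add_mul_b2Velocity ν hpos hlt]
    ring
  have hprod : ∀ t ∈ Ici (0 : ℝ), x t 0 ^ 2 * x t 1 ^ 2 = 4 * ν * (1 + ν) * t ^ 2
      + 2 * ν * (x0 0 ^ 2 + x0 1 ^ 2) * t + x0 0 ^ 2 * x0 1 ^ 2 := by
    refine eqOn_Ici_of_hasDerivWithinAt (fun s hs => ?_) (hasDerivAt_quadratic _ _ _)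
      (by simp [hstart])
    obtain ⟨hpos, hlt⟩ := hcham s hs
    refine ((hv0 s hs).sq_mul_sq (hv1 s hs)).congr_deriv ?_
    rw [b2Velocity_cross_identity ν hpos hlt, hsum s hs]
    ring
  exact fun t ht => ⟨by simpa using hsum t ht, hprod t ht⟩

theorem stmt17 (ν : ℝ) (hν : 0 < ν) (x : ℝ → Fin 2 → ℝ) (x0 : Fin 2 → ℝ)
    (hord : 0 < x0 1 ∧ x0 1 < x0 0) (hstart : x 0 = x0)
    (hcham : ∀ t ∈ Set.Ici (0 : ℝ), 0 < x t 1 ∧ x t 1 < x t 0)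
    (hode : ∀ t ∈ Set.Ici (0 : ℝ), ∀ i : Fin 2, HasDerivWithinAt (fun s => x s i)
      (∑ j ∈ Finset.univ.erase i,
          (1 / (x t i - x t j) + 1 / (x t i + x t j)) + ν / x t i)
      (Set.Ici 0) t) :
    ∀ t ∈ Set.Ici (0 : ℝ),
      (x t 0) ^ 2 + (x t 1) ^ 2 = 4 * (1 + ν) * t + ((x0 0) ^ 2 + (x0 1) ^ 2) ∧
      (x t 0) ^ 2 * (x t 1) ^ 2
        = 4 * ν * (1 + ν) * t ^ 2 + 2 * ν * ((x0 0) ^ 2 + (x0 1) ^ 2) * t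
          + (x0 0) ^ 2 * (x0 1) ^ 2 :=
  stmt17_general ν x x0 hstart hcham hode
end

section
/- Let x : I → ℝ^N be differentiable with values in the open D_N chamber {x_1 > ... > x_{N-1} > |x_N|} and satisfy the D_N ODE x_i' = Σ_{j≠i}(1/(x_i−x_j) + 1/(x_i+x_j)). If x_N(t_0) = 0 for some t_0 ∈ I, then x_N(t) = 0 for all t ∈ I, and the first N−1 components solve the B_{N−1} ODE with parameter ν = 2, i.e. x_i' = Σ_{j≠i, j≤N−1}(1/(x_i−x_j)+1/(x_i+x_j)) + 2/x_i for i = 1,...,N−1. -/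
/-!
The product `P = ∏ i, x i` is conserved along the flow: by the product rule and
`1/(a-b) + 1/(a+b) = 2a/(a²-b²)`, its derivative is `∑_{i ≠ j} 2P/(x_i² - x_j²)`, which vanishes
because the summand is antisymmetric in `(i, j)`. Since `P(t₀) = 0`, `P ≡ 0`, and in the open
chamber only the last coordinate can vanish. With `x_N = 0`, the two `j = N` terms of the
equation for `x_i` add up to `2 / x_i`.
-/

open Finset

theorem Finset.sum_sum_erase_eq_zero_of_antisymm {ι M : Type*} [DecidableEq ι] [AddCommMonoid M]
    (s : Finset ι) (f : ι → ι → M) (hf : ∀ i ∈ s, ∀ j ∈ s, i ≠ j → f i j + f j i = 0) :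
    ∑ i ∈ s, ∑ j ∈ s.erase i, f i j = 0 := by
  rw [sum_sigma']
  refine sum_involution (fun p _ => ⟨p.2, p.1⟩) ?_ ?_ ?_ ?_
  · rintro ⟨i, j⟩ hp
    simp only [mem_sigma, mem_erase] at hp
    exact hf i hp.1 j hp.2.2 hp.2.1.symm
  · rintro ⟨i, j⟩ hp - h
    simp only [mem_sigma, mem_erase] at hp
    simp only [Sigma.mk.injEq] at h
    exact hp.2.1 h.1
  · rintro ⟨i, j⟩ hp
    simp only [mem_sigma, mem_erase] at hp ⊢
    exact ⟨hp.2.2, hp.2.1.symm, hp.1⟩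
  · rintro ⟨i, j⟩ -
    rfl

theorem inv_sub_add_inv_add {K : Type*} [Field K] {a b : K} (h : a ^ 2 ≠ b ^ 2) :
    1 / (a - b) + 1 / (a + b) = 2 * a / (a ^ 2 - b ^ 2) := by
  have hsub : a - b ≠ 0 := fun h' => h (by rw [sub_eq_zero.1 h'])
  have hadd : a + b ≠ 0 := fun h' => h (by rw [eq_neg_of_add_eq_zero_left h', neg_sq])
  field_simp
  ring

theorem sum_prod_erase_mul_sum_erase_eq_zero {ι K : Type*} [DecidableEq ι] [Field K]
    (s : Finset ι) (y : ι → K) (hy : ∀ i ∈ s, ∀ j ∈ s, i ≠ j → y i ^ 2 ≠ y j ^ 2) :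
    ∑ i ∈ s, (∏ k ∈ s.erase i, y k) * ∑ j ∈ s.erase i, (1 / (y i - y j) + 1 / (y i + y j)) = 0 := by
  have hterm : ∀ i ∈ s, ∀ j ∈ s.erase i,
      (∏ k ∈ s.erase i, y k) * (1 / (y i - y j) + 1 / (y i + y j))
        = 2 * (∏ k ∈ s, y k) / (y i ^ 2 - y j ^ 2) := by
    intro i hi j hj
    rw [inv_sub_add_inv_add (hy i hi j (mem_erase.1 hj).2 (mem_erase.1 hj).1.symm),
      ← mul_prod_erase s y hi]
    ring
  calc _ = ∑ i ∈ s, ∑ j ∈ s.erase i, 2 * (∏ k ∈ s, y k) / (y i ^ 2 - y j ^ 2) :=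
        sum_congr rfl fun i hi => by rw [mul_sum]; exact sum_congr rfl (hterm i hi)
    _ = 0 := sum_sum_erase_eq_zero_of_antisymm s _ fun i _ j _ _ => by
        rw [← neg_sub (y i ^ 2), div_neg, add_neg_cancel]

theorem Convex.is_const_of_hasDerivWithinAt_zero {G : Type*} [NormedAddCommGroup G]
    [NormedSpace ℝ G] {f : ℝ → G} {s : Set ℝ} (hs : Convex ℝ s)
    (hf : ∀ t ∈ s, HasDerivWithinAt f 0 s t) {a b : ℝ} (ha : a ∈ s) (hb : b ∈ s) : f a = f b := by
  have h := hs.norm_image_sub_le_of_norm_hasDerivWithin_le hf (fun _ _ => norm_zero.le) hb ha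
  rwa [zero_mul, norm_le_zero_iff, sub_eq_zero] at h

theorem hasDerivWithinAt_prod_zero_of_calogeroD {ι : Type*} [Fintype ι] [DecidableEq ι]
    {x : ℝ → ι → ℝ} {s : Set ℝ} {t : ℝ} (hsep : ∀ i j, i ≠ j → x t i ^ 2 ≠ x t j ^ 2)
    (hode : ∀ i, HasDerivWithinAt (fun r => x r i)
      (∑ j ∈ univ.erase i, (1 / (x t i - x t j) + 1 / (x t i + x t j))) s t) :
    HasDerivWithinAt (fun r => ∏ i, x r i) 0 s t := by
  have h := HasDerivWithinAt.fun_finsetProd (u := univ) fun i _ => hode i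
  simp only [smul_eq_mul] at h
  rwa [sum_prod_erase_mul_sum_erase_eq_zero univ (x t) fun i _ j _ => hsep i j] at h

section WeylChamberD

variable {N : ℕ} {y : Fin N → ℝ}

theorem sq_ne_sq_of_weylChamberD (hy : ∀ i j, i < j → |y j| < y i) {i j : Fin N} (hij : i ≠ j) :
    y i ^ 2 ≠ y j ^ 2 := by
  have key : ∀ {i j : Fin N}, i < j → y j ^ 2 < y i ^ 2 := fun {i j} h =>
    sq_lt_sq' (neg_lt_of_abs_lt (hy i j h)) (lt_of_abs_lt (hy i j h))
  rcases hij.lt_or_gt with h | h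
  · exact (key h).ne'
  · exact (key h).ne

theorem eq_zero_of_prod_eq_zero_of_weylChamberD (hy : ∀ i j, i < j → |y j| < y i) {l : Fin N}
    (hl : ∀ i, i ≤ l) (h : ∏ i, y i = 0) : y l = 0 := by
  obtain ⟨i, -, hi⟩ := prod_eq_zero_iff.1 h
  rcases (hl i).lt_or_eq with hlt | rfl
  · have := hy i l hlt
    rw [hi] at this
    exact absurd this (abs_nonneg _).not_gt
  · exact hi

end WeylChamberD

theorem stmt18 (N : ℕ) (hN : 2 ≤ N) (I : Set ℝ) (hI : Convex ℝ I)
    (x : ℝ → Fin N → ℝ)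
    (hcham : ∀ t ∈ I, ∀ i j : Fin N, i < j → |x t j| < x t i)
    (hode : ∀ t ∈ I, ∀ i : Fin N, HasDerivWithinAt (fun s => x s i)
      (∑ j ∈ Finset.univ.erase i, (1 / (x t i - x t j) + 1 / (x t i + x t j))) I t)
    (t0 : ℝ) (ht0 : t0 ∈ I) (hlast : x t0 ⟨N - 1, by omega⟩ = 0) :
    (∀ t ∈ I, x t ⟨N - 1, by omega⟩ = 0) ∧
    (∀ t ∈ I, ∀ i : Fin N, (i : ℕ) < N - 1 →
      HasDerivWithinAt (fun s => x s i)
        (∑ j ∈ (Finset.univ.erase i).erase ⟨N - 1, by omega⟩,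
            (1 / (x t i - x t j) + 1 / (x t i + x t j))
          + 2 / x t i) I t) := by
  set last : Fin N := ⟨N - 1, by omega⟩
  have hprod : ∀ t ∈ I, ∏ i, x t i = ∏ i, x t0 i :=
    fun t ht => hI.is_const_of_hasDerivWithinAt_zero (fun r hr =>
      hasDerivWithinAt_prod_zero_of_calogeroD (fun i j => sq_ne_sq_of_weylChamberD (hcham r hr))
        (hode r hr)) ht ht0
  have hzero : ∀ t ∈ I, x t last = 0 := fun t ht =>
    eq_zero_of_prod_eq_zero_of_weylChamberD (hcham t ht) (fun i => Nat.le_sub_one_of_lt i.isLt)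
      (by rw [hprod t ht]; exact prod_eq_zero (mem_univ last) hlast)
  refine ⟨hzero, fun t ht i hi => ?_⟩
  have hmem : last ∈ univ.erase i :=
    mem_erase.2 ⟨fun h => hi.ne (congrArg Fin.val h).symm, mem_univ _⟩
  convert hode t ht i using 1
  rw [← add_sum_erase _ _ hmem, hzero t ht]
  ring
end
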